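/- arXiv:2110.05405 — 2 statements merged into one kernel-verified Lean document; each statement's English description precedes it below -/
import Mathlib

section
/- Let w be a word representing a finite simple graph G. Orient each edge xy of G as x→y if the leftmost occurrence of x in w is to the left of the leftmost occurrence of y in w. Then this orientation of G is semi-transitive, and the vertex whose letter occurs first in w is a source of this orientation. -/
/-!
Two distinct letters `x`, `y` alternate in `w` exactly when one of them, say `x`, leads the other:
in every prefix of `w`, `x` occurs as often as `y` or once more. Of two alternating letters only
the one occurring first can lead. Along a directed path `p 0 → ⋯ → p k` each vertex leads the
next, so in every prefix the counts of `p 0, …, p k` decrease; when `p 0` and `p k` are adjacent,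
`p 0` also leads `p k`, so the counts drop by at most one along the whole path. Hence every `p i`
leads every later `p j`, so they alternate and are adjacent, with the edge pointing forwards.
-/

namespace WordRepr

variable {V : Type*}

/-- Two letters `x` and `y` alternate in a word `w` if in the subsequence of `w`
formed by all occurrences of `x` and `y`, no two consecutive letters are equal. -/
def Alternates [DecidableEq V] (w : List V) (x y : V) : Prop :=
  List.Chain' (· ≠ ·) (w.filter fun z => decide (z = x ∨ z = y))

/-- A word `w` represents the graph `G` if every vertex occurs in `w`, and two
distinct vertices alternate in `w` iff they are adjacent in `G`. -/
def Represents [DecidableEq V] (G : SimpleGraph V) (w : List V) : Prop :=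
  (∀ v : V, v ∈ w) ∧ ∀ x y : V, x ≠ y → (Alternates w x y ↔ G.Adj x y)

/-- A graph is word-representable if some word represents it. -/
def WordRepresentable [DecidableEq V] (G : SimpleGraph V) : Prop :=
  ∃ w : List V, Represents G w

/-- A word is uniform if every letter occurring in it occurs the same number of times. -/
def Uniform [DecidableEq V] (w : List V) : Prop :=
  ∀ x y : V, x ∈ w → y ∈ w → w.count x = w.count y

/-- `o` is an orientation of `G`: every oriented pair is an edge, and every edge
gets exactly one of its two directions. -/
def IsOrientationOf (G : SimpleGraph V) (o : V → V → Prop) : Prop :=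
  (∀ x y : V, o x y → G.Adj x y) ∧ ∀ x y : V, G.Adj x y → (o x y ↔ ¬ o y x)

/-- A relation is acyclic if it has no directed cycle. -/
def Acyclic (o : V → V → Prop) : Prop :=
  ∀ v : V, ¬ Relation.TransGen o v v

/-- An orientation of `G` is semi-transitive if it is acyclic and for every
directed path `p 0 → p 1 → ⋯ → p k` whose endpoints are adjacent in `G`,
all the edges `p i → p j` (`i < j`) are present and oriented forwards. -/
def SemiTransitive (G : SimpleGraph V) (o : V → V → Prop) : Prop :=
  IsOrientationOf G o ∧ Acyclic o ∧
    ∀ (k : ℕ) (p : Fin (k + 1) → V),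
      (∀ i : Fin k, o (p i.castSucc) (p i.succ)) →
      G.Adj (p 0) (p (Fin.last k)) →
      ∀ i j : Fin (k + 1), i < j → o (p i) (p j)

theorem isOrientationOf_of_injective {α : Type*} [LinearOrder α] (G : SimpleGraph V)
    {f : V → α} (hf : Function.Injective f) :
    IsOrientationOf G fun x y => G.Adj x y ∧ f x < f y := by
  refine ⟨fun _ _ h => h.1, fun x y hadj => ⟨fun h h' => h.2.not_gt h'.2, fun h => ⟨hadj, ?_⟩⟩⟩
  exact (lt_or_gt_of_ne (hf.ne hadj.ne)).resolve_right fun hlt => h ⟨hadj.symm, hlt⟩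

theorem acyclic_of_lt {α : Type*} [Preorder α] {r : V → V → Prop} (f : V → α)
    (hr : ∀ x y, r x y → f x < f y) : Acyclic r := fun v hv => by
  have := Relation.TransGen.lift f hr v v hv
  rw [Relation.transGen_eq_self] at this
  exact lt_irrefl (f v) this

section Leads

variable [DecidableEq V]

theorem idxOf_head_lt {w : List V} (h : w ≠ []) {u : V} (hu : u ≠ w.head h) :
    w.idxOf (w.head h) < w.idxOf u := by
  cases w with
  | nil => contradiction
  | cons a t =>
    rw [List.head_cons] at hu
    simp [List.idxOf_cons_ne t hu.symm]

def Leads (w : List V) (x y : V) : Prop :=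
  ∀ n : ℕ, (w.take n).count y ≤ (w.take n).count x ∧
    (w.take n).count x ≤ (w.take n).count y + 1

theorem leads_nil (x y : V) : Leads [] x y := by
  simp [Leads]

theorem leads_cons_of_ne {a x y : V} (hax : a ≠ x) (hay : a ≠ y) (t : List V) :
    Leads (a :: t) x y ↔ Leads t x y := by
  refine ⟨fun h n => ?_, fun h n => ?_⟩
  · simpa [List.count_cons, hax, hay] using h (n + 1)
  · cases n <;> simp [hax, hay, h _]

theorem leads_cons_self {x y : V} (hxy : x ≠ y) (t : List V) :
    Leads (x :: t) x y ↔ Leads t y x := by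
  refine ⟨fun h n => ?_, fun h n => ?_⟩
  · have := h (n + 1)
    simp only [List.take_succ_cons, List.count_cons_self, List.count_cons_of_ne hxy] at this
    omega
  · cases n with
    | zero => simp
    | succ n =>
      have := h n
      simp only [List.take_succ_cons, List.count_cons_self, List.count_cons_of_ne hxy]
      omega

theorem not_leads_cons {x y : V} (hxy : x ≠ y) (t : List V) : ¬ Leads (y :: t) x y := by
  intro h
  simpa [hxy.symm] using h 1

theorem filter_or_comm (w : List V) (x y : V) :
    w.filter (fun z => decide (z = x ∨ z = y)) = w.filter fun z => decide (z = y ∨ z = x) := by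
  simp only [or_comm]

theorem isChain_cons_filter_iff_leads {x y : V} (hxy : x ≠ y) (w : List V) :
    List.IsChain (· ≠ ·) (y :: w.filter fun z => decide (z = x ∨ z = y)) ↔ Leads w x y := by
  induction w generalizing x y with
  | nil => simp [leads_nil]
  | cons a t ih =>
    by_cases hax : a = x
    · subst hax
      rw [leads_cons_self hxy, ← ih hxy.symm, filter_or_comm]
      simp [hxy.symm]
    · by_cases hay : a = y
      · subst hay
        simp [not_leads_cons hxy]
      · simp [hax, hay, leads_cons_of_ne hax hay, ← ih hxy]

theorem alternates_iff_leads {x y : V} (hxy : x ≠ y) (w : List V) :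
    Alternates w x y ↔ Leads w x y ∨ Leads w y x := by
  rw [← isChain_cons_filter_iff_leads hxy, ← isChain_cons_filter_iff_leads hxy.symm,
    ← filter_or_comm w x y, Alternates]
  set f := w.filter fun z => decide (z = x ∨ z = y) with hf
  refine ⟨fun hc => ?_, fun hc => hc.elim List.IsChain.of_cons List.IsChain.of_cons⟩
  simp only [List.isChain_cons]
  rcases hhead : f.head? with _ | b
  · exact Or.inl ⟨by simp, hc⟩
  · have hb : b = x ∨ b = y := by
      simpa [hf] using (List.mem_filter.mp (List.mem_of_mem_head? hhead)).2
    rcases hb with rfl | rfl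
    · exact Or.inl ⟨by simpa using hxy.symm, hc⟩
    · exact Or.inr ⟨by simpa using hxy, hc⟩

theorem Leads.idxOf_le {w : List V} {x y : V} (h : Leads w x y) (hy : y ∈ w) :
    w.idxOf x ≤ w.idxOf y := by
  set n := w.idxOf y + 1
  have hy_take : y ∈ w.take n := (List.mem_take_iff_idxOf_lt hy).mpr (Nat.lt_succ_self _)
  have hx_take : x ∈ w.take n :=
    List.count_pos_iff.mp ((List.count_pos_iff.mpr hy_take).trans_le (h n).1)
  exact Nat.lt_succ_iff.mp
    ((List.mem_take_iff_idxOf_lt (List.mem_of_mem_take hx_take)).mp hx_take)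

theorem leads_of_alternates {w : List V} {x y : V} (hxy : x ≠ y) (halt : Alternates w x y)
    (hx : x ∈ w) (hlt : w.idxOf x < w.idxOf y) : Leads w x y :=
  ((alternates_iff_leads hxy w).mp halt).resolve_right fun h => (h.idxOf_le hx).not_gt hlt

theorem leads_of_path {w : List V} {k : ℕ} {p : Fin (k + 1) → V}
    (hstep : ∀ i : Fin k, Leads w (p i.castSucc) (p i.succ))
    (hends : Leads w (p 0) (p (Fin.last k))) {i j : Fin (k + 1)} (hij : i ≤ j) :
    Leads w (p i) (p j) := by
  intro n
  have hanti : Antitone fun i => (w.take n).count (p i) :=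
    Fin.antitone_iff_succ_le.mpr fun i => (hstep i n).1
  refine ⟨hanti hij, ?_⟩
  calc (w.take n).count (p i) ≤ (w.take n).count (p 0) := hanti (Fin.zero_le i)
    _ ≤ (w.take n).count (p (Fin.last k)) + 1 := (hends n).2
    _ ≤ (w.take n).count (p j) + 1 := Nat.add_le_add_right (hanti (Fin.le_last j)) 1

end Leads

namespace Represents

variable [DecidableEq V] {G : SimpleGraph V} {w : List V} {x y : V}

theorem leads_of_adj (hw : Represents G w) (hadj : G.Adj x y) (hlt : w.idxOf x < w.idxOf y) :
    Leads w x y :=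
  leads_of_alternates hadj.ne ((hw.2 x y hadj.ne).mpr hadj) (hw.1 x) hlt

theorem adj_of_leads (hw : Represents G w) (hxy : x ≠ y) (h : Leads w x y) : G.Adj x y :=
  (hw.2 x y hxy).mp ((alternates_iff_leads hxy w).mpr (Or.inl h))

theorem adj_idxOf_lt_of_path (hw : Represents G w) {k : ℕ} {p : Fin (k + 1) → V}
    (hpath : ∀ i : Fin k,
      G.Adj (p i.castSucc) (p i.succ) ∧ w.idxOf (p i.castSucc) < w.idxOf (p i.succ))
    (hadj : G.Adj (p 0) (p (Fin.last k))) {i j : Fin (k + 1)} (hij : i < j) :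
    G.Adj (p i) (p j) ∧ w.idxOf (p i) < w.idxOf (p j) := by
  have hmono : StrictMono fun i => w.idxOf (p i) :=
    Fin.strictMono_iff_lt_succ.mpr fun i => (hpath i).2
  have h0last : (0 : Fin (k + 1)) < Fin.last k :=
    (Fin.zero_le _).lt_of_ne fun h => hadj.ne (congrArg p h)
  have hends := hw.leads_of_adj hadj (hmono h0last)
  have hsteps i := hw.leads_of_adj (hpath i).1 (hpath i).2
  refine ⟨hw.adj_of_leads (fun h => (hmono hij).ne (congrArg w.idxOf h)) ?_, hmono hij⟩
  exact leads_of_path hsteps hends hij.le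

end Represents

theorem leftmost_orientation_semiTransitive_general [DecidableEq V]
    (G : SimpleGraph V) (w : List V) (hw : Represents G w) :
    SemiTransitive G (fun x y => G.Adj x y ∧ w.idxOf x < w.idxOf y) ∧
    ∀ (h : w ≠ []) (u : V), G.Adj (w.head h) u →
      w.idxOf (w.head h) < w.idxOf u := by
  have hinj : Function.Injective w.idxOf := fun x y h => (List.idxOf_inj (hw.1 x)).mp h
  refine ⟨⟨isOrientationOf_of_injective G hinj, acyclic_of_lt w.idxOf fun _ _ h => h.2,
    fun _ _ hpath hadj _ _ hij => hw.adj_idxOf_lt_of_path hpath hadj hij⟩, ?_⟩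
  exact fun h u hadj => idxOf_head_lt h hadj.ne.symm

/-- Orienting each edge of `G` from the letter whose leftmost occurrence in a
representing word `w` comes first yields a semi-transitive orientation, in which
the first letter of `w` is a source. -/
theorem leftmost_orientation_semiTransitive [Fintype V] [DecidableEq V]
    (G : SimpleGraph V) (w : List V) (hw : Represents G w) :
    SemiTransitive G (fun x y => G.Adj x y ∧ w.idxOf x < w.idxOf y) ∧
    ∀ (h : w ≠ []) (u : V), G.Adj (w.head h) u →
      w.idxOf (w.head h) < w.idxOf u :=
  leftmost_orientation_semiTransitive_general G w hw

end WordRepr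
end

section
/- Consider the graph G on vertex set {1,…,7} with edge set {{1,2},{1,3},{1,4},{1,5},{1,6},{1,7},{2,3},{2,4},{2,6},{2,7},{3,4},{4,5},{4,7},{5,6},{5,7},{6,7}} (Graph 17′). The orientation of G given by 1→2, 1→3, 1→4, 1→5, 1→6, 1→7, 2→3, 2→4, 2→6, 2→7, 3→4, 5→6, 5→7, 5→4, 7→6, 7→4 is semi-transitive; consequently G is word-representable. -/
/-!
The orientation is transitive: it is a strict partial order, with linear extensions
`1 2 3 5 7 6 4`, `1 5 2 7 6 3 4` and `1 2 5 3 7 4 6`. In a transitive orientation every directed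
path already has all its forward chords, so semi-transitivity is immediate. Moreover Graph 17′ is
the comparability graph of this order and these three extensions realise it: two vertices are
comparable iff they appear in the same order in all three, which is exactly when they alternate
in the concatenation of the three permutations.
-/

namespace WordRepr

variable {V : Type*}

/-- Graph 17′ on the vertices `{1,…,7}` (vertex `i` is encoded as `i - 1 : Fin 7`). -/
def graph17' : SimpleGraph (Fin 7) :=
  SimpleGraph.fromRel fun x y =>
    ((x : ℕ) + 1, (y : ℕ) + 1) ∈
      [(1, 2), (1, 3), (1, 4), (1, 5), (1, 6), (1, 7), (2, 3), (2, 4), (2, 6), (2, 7),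
        (3, 4), (4, 5), (4, 7), (5, 6), (5, 7), (6, 7)]

/-- The orientation `1→2,…,1→7, 2→3, 2→4, 2→6, 2→7, 3→4, 5→6, 5→7, 5→4, 7→6, 7→4`. -/
def orient17' (x y : Fin 7) : Prop :=
  ((x : ℕ) + 1, (y : ℕ) + 1) ∈
    [(1, 2), (1, 3), (1, 4), (1, 5), (1, 6), (1, 7), (2, 3), (2, 4), (2, 6), (2, 7),
      (3, 4), (5, 6), (5, 7), (5, 4), (7, 6), (7, 4)]

theorem rel_of_forall_rel_succ {o : V → V → Prop} [IsTrans V o] {k : ℕ} {p : Fin (k + 1) → V}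
    (h : ∀ i : Fin k, o (p i.castSucc) (p i.succ)) {i j : Fin (k + 1)} (hij : i < j) :
    o (p i) (p j) := by
  obtain ⟨i, hi⟩ := i
  obtain ⟨j, hj⟩ := j
  induction j with
  | zero => exact absurd hij (Fin.not_lt_zero _)
  | succ m ih =>
    have step : o (p ⟨m, by omega⟩) (p ⟨m + 1, hj⟩) := h ⟨m, by omega⟩
    rcases Nat.lt_succ_iff_lt_or_eq.mp (Fin.lt_def.mp hij) with hlt | rfl
    · exact _root_.trans (ih (by omega) hlt) step
    · exact step

theorem acyclic_of_isTrans {o : V → V → Prop} [IsTrans V o] (hirr : ∀ v, ¬ o v v) :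
    Acyclic o := fun v hv => hirr v (Relation.transGen_eq_self (r := o) ▸ hv)

theorem semiTransitive_of_isTrans {G : SimpleGraph V} {o : V → V → Prop} [IsTrans V o]
    (hG : IsOrientationOf G o) : SemiTransitive G o :=
  ⟨hG, acyclic_of_isTrans fun v hv => G.irrefl (hG.1 v v hv),
    fun _ _ h _ _ _ hij => rel_of_forall_rel_succ h hij⟩

instance [DecidableEq V] (w : List V) (x y : V) : Decidable (Alternates w x y) :=
  inferInstanceAs (Decidable (List.IsChain _ _))

instance (x y : Fin 7) : Decidable (orient17' x y) :=
  inferInstanceAs (Decidable (_ ∈ _))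

instance : DecidableRel graph17'.Adj := fun x y =>
  inferInstanceAs (Decidable (x ≠ y ∧ (_ ∨ _)))

instance : IsTrans (Fin 7) orient17' := ⟨by decide⟩

theorem isOrientationOf_graph17'_orient17' : IsOrientationOf graph17' orient17' := by
  unfold IsOrientationOf; decide

theorem represents_graph17' :
    Represents graph17'
      ([0, 1, 2, 4, 6, 5, 3] ++ [0, 4, 1, 6, 5, 2, 3] ++ [0, 1, 4, 2, 6, 3, 5]) := by
  unfold Represents; decide

/-- The given orientation of Graph 17′ is semi-transitive; consequently Graph 17′ is
word-representable. -/
theorem graph17'_semiTransitive_and_wordRepresentable :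
    SemiTransitive graph17' orient17' ∧ WordRepresentable graph17' :=
  ⟨semiTransitive_of_isTrans isOrientationOf_graph17'_orient17', _, represents_graph17'⟩

end WordRepr
end
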